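/- arXiv:2602.14185 — 3 statements merged into one kernel-verified Lean document; each statement's English description precedes it below -/
import Mathlib

section
/- Theorem (tightness of Perturbed GDA for game stationarity). Let ε ∈ (0,1) and ℓ, D_Y > 0, set r_y := ε/D_Y, α := 1/(4(ℓ + r_y)) and c := r_y²·α/(16ℓ²), and consider the hard GS instance. Run Perturbed GDA on f̃(x,y) = f(x,y) − (r_y/2)y² initialized at x_0 := 2ε/ℓ and y_0 := (2b(1 + ℓc)α/(√(A_1² − 4B_1) + 2ℓc − A_1))·x_0. Assume ε is small enough that 3ℓc < 1, A_1 < 0, A_1² ≥ 4B_1, 2B_1 < −A_1, 0 ≤ x_0 ≤ r_y·D_Y/b and 0 ≤ y_0 ≤ D_Y. Then for every T ∈ ℕ, if (x_T, y_T) is an ε-game-stationary point of min_{x∈ℝ} max_{y∈[0,D_Y]} f(x,y), then (1 + λ_1)^T ≤ 1/2. -/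
noncomputable section

/-- `b = √(3 ℓ r_y)` in the hard GS instance. -/
def bGS (l ry : ℝ) : ℝ := Real.sqrt (3 * l * ry)

/-- The hard GS instance objective `f`. -/
def fGS (l ry Dy : ℝ) (x y : ℝ) : ℝ :=
  if x < 0 then 0
  else if x ≤ ry * Dy / bGS l ry then -(l / 2) * x ^ 2 + bGS l ry * x * y
  else -(l * ry ^ 2 * Dy ^ 2 / (2 * (bGS l ry) ^ 2)) + ry * Dy * y

/-- Partial derivative of `fGS` in `x`. -/
def fxGS (l ry Dy : ℝ) (x y : ℝ) : ℝ :=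
  if x < 0 then 0
  else if x ≤ ry * Dy / bGS l ry then -l * x + bGS l ry * y
  else 0

/-- Partial derivative of `fGS` in `y`. -/
def fyGS (l ry Dy : ℝ) (x y : ℝ) : ℝ :=
  if x < 0 then 0
  else if x ≤ ry * Dy / bGS l ry then bGS l ry * x
  else ry * Dy

/-- Metric projection of `v` onto the interval `[0, Dy]`. -/
def projI (Dy v : ℝ) : ℝ := max 0 (min Dy v)

/-- `A₁ = ℓc − α r_y (1 + 3ℓc)`. -/
def A1 (l c α ry : ℝ) : ℝ := l * c - α * ry * (1 + 3 * l * c)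

/-- `B₁ = 2 ℓ c α r_y`. -/
def B1 (l c α ry : ℝ) : ℝ := 2 * l * c * α * ry

/-- `λ₁ = (A₁ + √(A₁² − 4B₁))/2`. -/
def lam1 (l c α ry : ℝ) : ℝ :=
  (A1 l c α ry + Real.sqrt ((A1 l c α ry) ^ 2 - 4 * B1 l c α ry)) / 2

/-- `(x, y)` is an `ε`-game-stationary point of
`min_{x ∈ ℝ} max_{y ∈ [0, Dy]} fGS(x,y)`. -/
def IsGS1 (l ry Dy ε x y : ℝ) : Prop :=
  y ∈ Set.Icc 0 Dy ∧
    ∃ u v : ℝ, (∀ s : ℝ, u * (s - x) ≤ 0) ∧ (∀ s ∈ Set.Icc (0 : ℝ) Dy, v * (s - y) ≤ 0) ∧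
      |fxGS l ry Dy x y + u| ≤ ε ∧ |-(fyGS l ry Dy x y) + v| ≤ ε

/-! On the region `0 ≤ x ≤ r_y D_Y / b` the objective is quadratic, so Perturbed GDA acts there
as a linear map. Writing its eigenvalues as `1 + λ`, the characteristic equation becomes
`λ² - A₁λ + B₁ = 0`, so `1 + λ₁ ∈ (0, 1]` is an eigenvalue, with an eigenvector `(1, κ₁)`.
Started on this eigenline, the iterates stay on it, inside the region, with
`x_t = (1 + λ₁)^t x₀`. Along the eigenline `∂ₓf = (bκ₁ - ℓ)x ≥ ℓx`, and the normal cone of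
`X = ℝ` is trivial, so `ε`-stationarity at time `T` forces `ℓ x_T ≤ ε = ℓ x₀ / 2`. -/

/-- Slope of the eigenvector `(1, κ₁)` of the linearised GDA map for the eigenvalue `1 + λ₁`;
it is the ratio `y₀ / x₀` of the initialisation. -/
def kappa1 (l c α ry : ℝ) : ℝ :=
  2 * bGS l ry * (1 + l * c) * α /
    (Real.sqrt (A1 l c α ry ^ 2 - 4 * B1 l c α ry) + 2 * l * c - A1 l c α ry)

section

variable {l ry Dy c α : ℝ}

theorem bGS_sq (hl : 0 ≤ l) (hry : 0 ≤ ry) : bGS l ry ^ 2 = 3 * l * ry :=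
  Real.sq_sqrt (by positivity)

theorem fxGS_of_mem {x : ℝ} (y : ℝ) (hx : x ∈ Set.Icc 0 (ry * Dy / bGS l ry)) :
    fxGS l ry Dy x y = -l * x + bGS l ry * y := by
  rw [fxGS, if_neg (not_lt.mpr hx.1), if_pos hx.2]

theorem fyGS_of_mem {x : ℝ} (y : ℝ) (hx : x ∈ Set.Icc 0 (ry * Dy / bGS l ry)) :
    fyGS l ry Dy x y = bGS l ry * x := by
  rw [fyGS, if_neg (not_lt.mpr hx.1), if_pos hx.2]

theorem projI_of_mem {v : ℝ} (hv : v ∈ Set.Icc 0 Dy) : projI Dy v = v := by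
  rw [projI, min_eq_right hv.2, max_eq_right hv.1]

theorem eq_zero_of_forall_mul_sub_nonpos {u x : ℝ} (h : ∀ s, u * (s - x) ≤ 0) : u = 0 :=
  mul_self_eq_zero.mp (le_antisymm (by simpa using h (x + u)) (mul_self_nonneg u))

theorem B1_nonneg (hl : 0 ≤ l) (hc : 0 ≤ c) (hα : 0 ≤ α) (hry : 0 ≤ ry) : 0 ≤ B1 l c α ry := by
  unfold B1; positivity

theorem neg_half_lt_A1 (hlc : l * c ∈ Set.Ico 0 (1 / 3)) (hαry : α * ry ∈ Set.Ico 0 (1 / 4)) :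
    -(1 / 2) < A1 l c α ry := by
  obtain ⟨hp, hp'⟩ := hlc
  obtain ⟨hq, hq'⟩ := hαry
  unfold A1
  nlinarith [mul_nonneg hp (sub_nonneg.mpr hq'.le)]

theorem sqrt_disc_le_neg_A1 (hA : A1 l c α ry ≤ 0) (hB : 0 ≤ B1 l c α ry) :
    Real.sqrt (A1 l c α ry ^ 2 - 4 * B1 l c α ry) ≤ -A1 l c α ry :=
  Real.sqrt_le_iff.mpr ⟨by linarith, by nlinarith⟩

theorem lam1_nonpos (hA : A1 l c α ry ≤ 0) (hB : 0 ≤ B1 l c α ry) : lam1 l c α ry ≤ 0 := by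
  have := sqrt_disc_le_neg_A1 hA hB
  unfold lam1; linarith

theorem zero_lt_one_add_lam1 (hA : -2 < A1 l c α ry) : 0 < 1 + lam1 l c α ry := by
  have := Real.sqrt_nonneg (A1 l c α ry ^ 2 - 4 * B1 l c α ry)
  unfold lam1; linarith

theorem kappa1_denom_pos (hlc : 0 ≤ l * c) (hA : A1 l c α ry < 0) :
    0 < Real.sqrt (A1 l c α ry ^ 2 - 4 * B1 l c α ry) + 2 * l * c - A1 l c α ry := by
  have := Real.sqrt_nonneg (A1 l c α ry ^ 2 - 4 * B1 l c α ry)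
  linarith

theorem kappa1_nonneg (hl : 0 ≤ l) (hc : 0 ≤ c) (hα : 0 ≤ α) (hA : A1 l c α ry < 0) :
    0 ≤ kappa1 l c α ry :=
  div_nonneg (by unfold bGS; positivity) (kappa1_denom_pos (mul_nonneg hl hc) hA).le

theorem c_mul_bGS_mul_kappa1 (hl : 0 ≤ l) (hry : 0 ≤ ry) (hc : 0 ≤ c)
    (hA : A1 l c α ry < 0) (hdisc : 4 * B1 l c α ry ≤ A1 l c α ry ^ 2) :
    c * bGS l ry * kappa1 l c α ry = l * c - lam1 l c α ry := by
  have hD := Real.sq_sqrt (sub_nonneg.mpr hdisc)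
  have hden := kappa1_denom_pos (mul_nonneg hl hc) hA
  rw [kappa1, lam1, ← mul_div_assoc, div_eq_iff hden.ne']
  unfold A1 B1 at *
  linear_combination (2 * c * (1 + l * c) * α) * bGS_sq hl hry + (1 / 2) * hD

theorem α_mul_bGS_mul_one_add_lam1 (hl : 0 ≤ l) (hc : 0 ≤ c)
    (hA : A1 l c α ry < 0) (hdisc : 4 * B1 l c α ry ≤ A1 l c α ry ^ 2) :
    α * bGS l ry * (1 + lam1 l c α ry) = kappa1 l c α ry * (lam1 l c α ry + α * ry) := by
  have hD := Real.sq_sqrt (sub_nonneg.mpr hdisc)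
  have hden := kappa1_denom_pos (mul_nonneg hl hc) hA
  rw [kappa1, lam1, div_mul_eq_mul_div, eq_div_iff hden.ne']
  unfold A1 B1 at *
  linear_combination (α * bGS l ry / 2) * hD

theorem two_mul_le_bGS_mul_kappa1 (hl : 0 ≤ l) (hry : 0 ≤ ry) (hc : 0 ≤ c) (hα : 0 ≤ α)
    (hlc : 3 * l * c ≤ 1) (hA : A1 l c α ry < 0) :
    2 * l ≤ bGS l ry * kappa1 l c α ry := by
  have hD := sqrt_disc_le_neg_A1 hA.le (B1_nonneg hl hc hα hry)
  have hden := kappa1_denom_pos (mul_nonneg hl hc) hA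
  have hb : bGS l ry * (2 * bGS l ry * (1 + l * c) * α) = 6 * l * ry * (1 + l * c) * α := by
    linear_combination (2 * (1 + l * c) * α) * bGS_sq hl hry
  rw [kappa1, ← mul_div_assoc, le_div_iff₀ hden, hb]
  unfold A1 at *
  nlinarith [mul_le_mul_of_nonneg_left hD (by positivity : (0 : ℝ) ≤ 2 * l),
    mul_nonneg (by positivity : (0 : ℝ) ≤ 2 * l * ry * α) (by linarith : (0 : ℝ) ≤ 1 - 3 * l * c)]

theorem pow_mul_mem_Icc {μ x : ℝ} (hμ : μ ∈ Set.Icc 0 1) (hx : 0 ≤ x) (n : ℕ) :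
    μ ^ n * x ∈ Set.Icc 0 x :=
  ⟨mul_nonneg (pow_nonneg hμ.1 n) hx, mul_le_of_le_one_left hx (pow_le_one₀ hμ.1 hμ.2)⟩

theorem gda_orbit_on_eigenline {lam κ : ℝ} {xs ys : ℕ → ℝ}
    (hlam : 1 + lam ∈ Set.Icc 0 1) (hκ : 0 ≤ κ)
    (hx_eig : c * bGS l ry * κ = l * c - lam)
    (hy_eig : α * bGS l ry * (1 + lam) = κ * (lam + α * ry))
    (hx0 : xs 0 ∈ Set.Icc 0 (ry * Dy / bGS l ry)) (hy0 : ys 0 = κ * xs 0) (hy0le : ys 0 ≤ Dy)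
    (hxrec : ∀ t, xs (t + 1) = xs t - c * fxGS l ry Dy (xs t) (ys t))
    (hyrec : ∀ t, ys (t + 1) =
      projI Dy (ys t + α * (fyGS l ry Dy (xs (t + 1)) (ys t) - ry * ys t))) :
    ∀ t, xs t = (1 + lam) ^ t * xs 0 ∧ ys t = κ * xs t := by
  have hregion : Set.Icc 0 (xs 0) ⊆ Set.Icc 0 (ry * Dy / bGS l ry) :=
    Set.Icc_subset_Icc_right hx0.2
  intro t
  induction t with
  | zero => exact ⟨by simp, hy0⟩
  | succ t ih =>
    obtain ⟨hxt, hyt⟩ := ih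
    have hxt_mem : xs t ∈ Set.Icc 0 (ry * Dy / bGS l ry) := by
      rw [hxt]; exact hregion (pow_mul_mem_Icc hlam hx0.1 t)
    have hx_step : xs (t + 1) = (1 + lam) * xs t := by
      rw [hxrec, fxGS_of_mem _ hxt_mem, hyt]
      linear_combination (-xs t) * hx_eig
    have hx_succ : xs (t + 1) = (1 + lam) ^ (t + 1) * xs 0 := by
      rw [hx_step, hxt, pow_succ]; ring
    have hx_succ_mem : xs (t + 1) ∈ Set.Icc 0 (xs 0) := by
      rw [hx_succ]; exact pow_mul_mem_Icc hlam hx0.1 (t + 1)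
    have hy_step : ys t + α * (fyGS l ry Dy (xs (t + 1)) (ys t) - ry * ys t) = κ * xs (t + 1) := by
      rw [fyGS_of_mem _ (hregion hx_succ_mem), hyt, hx_step]
      linear_combination xs t * hy_eig
    refine ⟨hx_succ, ?_⟩
    rw [hyrec, hy_step, projI_of_mem]
    exact ⟨mul_nonneg hκ hx_succ_mem.1,
      (mul_le_mul_of_nonneg_left hx_succ_mem.2 hκ).trans (hy0 ▸ hy0le)⟩

theorem mul_le_of_isGS1_on_eigenline {ε x κ : ℝ} (hx : x ∈ Set.Icc 0 (ry * Dy / bGS l ry))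
    (hκ : 2 * l ≤ bGS l ry * κ) (h : IsGS1 l ry Dy ε x (κ * x)) : l * x ≤ ε := by
  obtain ⟨-, u, -, hu, -, hfx, -⟩ := h
  rw [eq_zero_of_forall_mul_sub_nonpos hu, add_zero, fxGS_of_mem _ hx] at hfx
  nlinarith [(abs_le.mp hfx).2, mul_le_mul_of_nonneg_right hκ hx.1]

end

theorem perturbed_gda_gs_tightness_general
    (l Dy ε ry c α : ℝ) (xs ys : ℕ → ℝ)
    (hl : 0 < l) (hDy : 0 < Dy) (hε : 0 < ε)
    -- parameter choices
    (hry : ry = ε / Dy)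
    (hα : α = 1 / (4 * (l + ry)))
    (hc : c = ry ^ 2 * α / (16 * l ^ 2))
    -- smallness assumptions on ε
    (hlc : 3 * l * c < 1)
    (hA1 : A1 l c α ry < 0)
    (hdisc : (A1 l c α ry) ^ 2 ≥ 4 * B1 l c α ry)
    -- initialization along the eigenvector
    (hx0 : xs 0 = 2 * ε / l)
    (hy0 : ys 0 = 2 * bGS l ry * (1 + l * c) * α /
      (Real.sqrt ((A1 l c α ry) ^ 2 - 4 * B1 l c α ry) + 2 * l * c - A1 l c α ry) * xs 0)
    (hx0mem : 0 ≤ xs 0 ∧ xs 0 ≤ ry * Dy / bGS l ry)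
    (hy0mem : 0 ≤ ys 0 ∧ ys 0 ≤ Dy)
    -- Perturbed GDA on f̃(x,y) = f(x,y) − (r_y/2) y²
    (hxrec : ∀ t, xs (t + 1) = xs t - c * fxGS l ry Dy (xs t) (ys t))
    (hyrec : ∀ t, ys (t + 1) =
      projI Dy (ys t + α * (fyGS l ry Dy (xs (t + 1)) (ys t) - ry * ys t))) :
    ∀ T : ℕ, IsGS1 l ry Dy ε (xs T) (ys T) →
      (1 + lam1 l c α ry) ^ T ≤ 1 / 2 := by
  have hry0 : 0 < ry := hry ▸ div_pos hε hDy
  have hα0 : 0 < α := hα ▸ by positivity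
  have hc0 : 0 < c := hc ▸ by positivity
  have hαry : α * ry < 1 / 4 := by
    rw [hα, div_mul_eq_mul_div, one_mul, div_lt_iff₀ (by positivity)]
    linarith
  have hA1_gt := neg_half_lt_A1 ⟨(mul_pos hl hc0).le, by linarith⟩ ⟨(mul_pos hα0 hry0).le, hαry⟩
  have hB1_nonneg := B1_nonneg hl.le hc0.le hα0.le hry0.le
  have hlam : 1 + lam1 l c α ry ∈ Set.Icc 0 1 :=
    ⟨(zero_lt_one_add_lam1 (by linarith)).le, by linarith [lam1_nonpos hA1.le hB1_nonneg]⟩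
  have horbit := gda_orbit_on_eigenline hlam (kappa1_nonneg hl.le hc0.le hα0.le hA1)
    (c_mul_bGS_mul_kappa1 hl.le hry0.le hc0.le hA1 hdisc)
    (α_mul_bGS_mul_one_add_lam1 hl.le hc0.le hA1 hdisc) hx0mem hy0 hy0mem.2 hxrec hyrec
  intro T hGS
  obtain ⟨hxT, hyT⟩ := horbit T
  have hxT_mem : xs T ∈ Set.Icc 0 (ry * Dy / bGS l ry) := by
    rw [hxT]; exact Set.Icc_subset_Icc_right hx0mem.2 (pow_mul_mem_Icc hlam hx0mem.1 T)
  have hbound := mul_le_of_isGS1_on_eigenline hxT_mem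
    (two_mul_le_bGS_mul_kappa1 hl.le hry0.le hc0.le hα0.le hlc.le hA1) (hyT ▸ hGS)
  rw [hxT, hx0, mul_left_comm, mul_div_cancel₀ _ hl.ne'] at hbound
  nlinarith

/-- Tightness of Perturbed GDA for game stationarity on the hard GS instance. -/
theorem perturbed_gda_gs_tightness
    (l Dy ε ry c α : ℝ) (xs ys : ℕ → ℝ)
    (hl : 0 < l) (hDy : 0 < Dy) (hε : 0 < ε) (hε1 : ε < 1)
    -- parameter choices
    (hry : ry = ε / Dy)
    (hα : α = 1 / (4 * (l + ry)))
    (hc : c = ry ^ 2 * α / (16 * l ^ 2))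
    -- smallness assumptions on ε
    (hlc : 3 * l * c < 1)
    (hA1 : A1 l c α ry < 0)
    (hdisc : (A1 l c α ry) ^ 2 ≥ 4 * B1 l c α ry)
    (hB1 : 2 * B1 l c α ry < -(A1 l c α ry))
    -- initialization along the eigenvector
    (hx0 : xs 0 = 2 * ε / l)
    (hy0 : ys 0 = 2 * bGS l ry * (1 + l * c) * α /
      (Real.sqrt ((A1 l c α ry) ^ 2 - 4 * B1 l c α ry) + 2 * l * c - A1 l c α ry) * xs 0)
    (hx0mem : 0 ≤ xs 0 ∧ xs 0 ≤ ry * Dy / bGS l ry)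
    (hy0mem : 0 ≤ ys 0 ∧ ys 0 ≤ Dy)
    -- Perturbed GDA on f̃(x,y) = f(x,y) − (r_y/2) y²
    (hxrec : ∀ t, xs (t + 1) = xs t - c * fxGS l ry Dy (xs t) (ys t))
    (hyrec : ∀ t, ys (t + 1) =
      projI Dy (ys t + α * (fyGS l ry Dy (xs (t + 1)) (ys t) - ry * ys t))) :
    ∀ T : ℕ, IsGS1 l ry Dy ε (xs T) (ys T) →
      (1 + lam1 l c α ry) ^ T ≤ 1 / 2 :=
  perturbed_gda_gs_tightness_general l Dy ε ry c α xs ys hl hDy hε hry hα hc hlc hA1 hdisc hx0 hy0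
    hx0mem hy0mem hxrec hyrec
end
end

section
/- Lemma (game stationarity controls optimization stationarity). Let f be ℓ-smooth and satisfy the standing assumptions. Fix x ∈ X and y ∈ Y, set Φ(z) := max_{y'∈Y} f(z,y') for z ∈ X, and let p denote the unique minimizer over z ∈ X of Φ(z) + ℓ‖z − x‖². Then for every u ∈ N_X(x) and every v ∈ N_Y(y): ‖p − x‖² ≤ (2·D_Y/ℓ)·‖−∇_y f(x,y) + v‖ + (1/ℓ²)·‖∇_x f(x,y) + u‖². -/
/-!
Write `Φ z = sup_{w ∈ Y} f z w`. Since `∇ₓ f (·, w)` is `ℓ`-Lipschitz, `f (·, w)` lies above each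
of its tangent planes up to `ℓ/2 ‖·‖²`, so it is `(-ℓ)`-strongly convex, and so is the supremum
`Φ`. Hence `Φ + ℓ ‖· - x‖²` is `ℓ`-strongly convex on `X`, and at its minimiser `p` this gives
`Φ p + (3ℓ/2) r² ≤ Φ x` with `r = ‖p - x‖`. On the other side, concavity of `f x` and
`v ∈ N_Y(y)` give `Φ x - f x y ≤ D_Y ‖-∇_y f + v‖`, and the tangent bound in `x` together with
`u ∈ N_X(x)` gives `f x y - f p y ≤ ‖∇ₓ f + u‖ r + (ℓ/2) r²`. Chaining these,
`ℓ r² ≤ D_Y ‖-∇_y f + v‖ + ‖∇ₓ f + u‖ r`, and AM-GM on the last product yields the bound.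
-/

open Set Filter Topology AffineMap
open scoped RealInnerProductSpace

noncomputable section

/-- Euclidean space `ℝ^m`. -/
abbrev Euc (m : ℕ) : Type := EuclideanSpace ℝ (Fin m)

/-- `f` is `l`-smooth, witnessed by the partial gradient maps `gx`, `gy`. -/
def LSmooth {n d : ℕ} (f : Euc n → Euc d → ℝ) (gx : Euc n → Euc d → Euc n)
    (gy : Euc n → Euc d → Euc d) (l : ℝ) : Prop :=
  (∀ x y, HasGradientAt (fun x' => f x' y) (gx x y) x) ∧
  (∀ x y, HasGradientAt (fun y' => f x y') (gy x y) y) ∧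
  (∀ x x' y y', ‖gx x y - gx x' y'‖ ≤ l * (‖x - x'‖ + ‖y - y'‖)) ∧
  (∀ x x' y y', ‖gy x y - gy x' y'‖ ≤ l * (‖x - x'‖ + ‖y - y'‖))

/-- Standing assumptions: `X` closed convex; `Y` nonempty compact convex
containing `0` with diameter `Dy`; `f x` concave on `Y` for every `x ∈ X`. -/
def Standing {n d : ℕ} (f : Euc n → Euc d → ℝ) (X : Set (Euc n)) (Y : Set (Euc d))
    (Dy : ℝ) : Prop :=
  IsClosed X ∧ Convex ℝ X ∧ Y.Nonempty ∧ IsCompact Y ∧ Convex ℝ Y ∧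
    (0 : Euc d) ∈ Y ∧ Metric.diam Y = Dy ∧ ∀ x ∈ X, ConcaveOn ℝ Y (f x)

section InnerProductSpace

variable {E : Type*} [NormedAddCommGroup E] [InnerProductSpace ℝ E]

lemma inner_le_norm_neg_add_mul {a v w : E} (hv : ⟪v, w⟫ ≤ 0) : ⟪a, w⟫ ≤ ‖-a + v‖ * ‖w‖ := by
  have hsplit : ⟪a, w⟫ = ⟪v, w⟫ - ⟪-a + v, w⟫ := by
    rw [inner_add_left, inner_neg_left]; ring
  linarith [neg_le_of_abs_le (abs_real_inner_le_norm (-a + v) w)]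

lemma strongConvexOn_mul_norm_sub_sq {s : Set E} (hs : Convex ℝ s) (c : ℝ) (x : E) :
    StrongConvexOn s (2 * c) fun z => c * ‖z - x‖ ^ 2 := by
  rw [strongConvexOn_iff_convex]
  have hlin : ConvexOn ℝ s fun z => -(2 * c) * ⟪x, z⟫ :=
    (-(2 * c) • innerSL ℝ x).toLinearMap.convexOn hs
  refine (hlin.add_const (c * ‖x‖ ^ 2)).congr fun z _ => ?_
  simp only [Pi.add_apply, norm_sub_sq_real, real_inner_comm x z]
  ring

lemma uniformConvexOn_sSup_image {ι : Type*} {s : Set E} {φ : ℝ → ℝ} {F : E → ι → ℝ}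
    {Y : Set ι} (hY : Y.Nonempty) (hbdd : ∀ z ∈ s, BddAbove (F z '' Y))
    (hF : ∀ w ∈ Y, UniformConvexOn s φ (F · w)) :
    UniformConvexOn s φ fun z => sSup (F z '' Y) := by
  refine ⟨(hF _ hY.some_mem).1, fun x hx y hy a b ha hb hab => ?_⟩
  refine csSup_le (hY.image _) ?_
  rintro _ ⟨w, hw, rfl⟩
  have hconv := (hF w hw).2 hx hy ha hb hab
  have hxw := le_csSup (hbdd x hx) (mem_image_of_mem _ hw)
  have hyw := le_csSup (hbdd y hy) (mem_image_of_mem _ hw)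
  simp only [smul_eq_mul] at hconv ⊢
  nlinarith [mul_le_mul_of_nonneg_left hxw ha, mul_le_mul_of_nonneg_left hyw hb]

lemma StrongConvexOn.add_sq_le_of_isMinOn {s : Set E} {m : ℝ} {f : E → ℝ} {p z : E}
    (hf : StrongConvexOn s m f) (hmin : IsMinOn f s p) (hp : p ∈ s) (hz : z ∈ s) :
    f p + m / 2 * ‖z - p‖ ^ 2 ≤ f z := by
  set K := m / 2 * ‖z - p‖ ^ 2
  have hgap : ∀ t ∈ Ioo (0 : ℝ) 1, (1 - t) * K ≤ f z - f p := by
    rintro t ⟨ht0, ht1⟩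
    have hconv := hf.2 hp hz (sub_pos.2 ht1).le ht0.le (sub_add_cancel 1 t)
    have hle : f p ≤ f ((1 - t) • p + t • z) :=
      isMinOn_iff.mp hmin _ (hf.1 hp hz (sub_pos.2 ht1).le ht0.le (sub_add_cancel 1 t))
    rw [norm_sub_rev] at hconv
    simp only [smul_eq_mul] at hconv
    have : t * ((1 - t) * K) ≤ t * (f z - f p) := by linear_combination hle + hconv
    exact le_of_mul_le_mul_left this ht0
  have hlim : Tendsto (fun t : ℝ => (1 - t) * K) (𝓝[>] 0) (𝓝 K) :=
    (Continuous.tendsto' (by fun_prop) 0 K (by ring)).mono_left nhdsWithin_le_nhds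
  linarith [le_of_tendsto hlim (eventually_of_mem (Ioo_mem_nhdsGT one_pos) hgap)]

variable [CompleteSpace E]

lemma HasGradientAt.hasDerivAt_comp_lineMap {h : E → ℝ} {g a b : E} {t : ℝ}
    (hg : HasGradientAt h g (lineMap a b t)) :
    HasDerivAt (fun s => h (lineMap a b s)) ⟪g, b - a⟫ t :=
  hg.hasFDerivAt.comp_hasDerivAt t hasDerivAt_lineMap

lemma add_inner_sub_le_of_lipschitz_gradient {h : E → ℝ} {g : E → E} {l : ℝ}
    (hg : ∀ z, HasGradientAt h (g z) z)
    (hlip : ∀ z z', ‖g z - g z'‖ ≤ l * ‖z - z'‖) (a b : E) :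
    h a + ⟪g a, b - a⟫ - l / 2 * ‖b - a‖ ^ 2 ≤ h b := by
  set φ : ℝ → ℝ := fun t => h (lineMap a b t) - t * ⟪g a, b - a⟫ + l / 2 * ‖b - a‖ ^ 2 * t ^ 2
  have hφ : ∀ t, HasDerivAt φ (⟪g (lineMap a b t) - g a, b - a⟫ + l * ‖b - a‖ ^ 2 * t) t := by
    intro t
    refine ((((hg _).hasDerivAt_comp_lineMap).sub ((hasDerivAt_id t).mul_const _)).add
      ((hasDerivAt_pow 2 t).const_mul (l / 2 * ‖b - a‖ ^ 2))).congr_deriv ?_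
    rw [inner_sub_left]; push_cast; ring
  have hφ' : ∀ t ∈ interior (Ici (0 : ℝ)),
      0 ≤ ⟪g (lineMap a b t) - g a, b - a⟫ + l * ‖b - a‖ ^ 2 * t := by
    intro t ht
    have ht : 0 < t := by simpa using ht
    have hdist : ‖g (lineMap a b t) - g a‖ ≤ l * (t * ‖b - a‖) := by
      simpa [← dist_eq_norm, dist_lineMap_left, abs_of_pos ht, dist_comm a b] using
        hlip (lineMap a b t) a
    nlinarith [neg_le_of_abs_le (abs_real_inner_le_norm (g (lineMap a b t) - g a) (b - a)),
      mul_le_mul_of_nonneg_right hdist (norm_nonneg (b - a))]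
  have hmono := monotoneOn_of_hasDerivWithinAt_nonneg (convex_Ici 0)
    (fun t _ => (hφ t).continuousAt.continuousWithinAt) (fun t _ => (hφ t).hasDerivWithinAt) hφ'
  have hφ01 := hmono (mem_Ici.mpr le_rfl) (mem_Ici.mpr zero_le_one) zero_le_one
  simp only [φ, lineMap_apply_zero, lineMap_apply_one] at hφ01
  linarith

lemma strongConvexOn_neg_of_lipschitz_gradient {s : Set E} (hs : Convex ℝ s) {h : E → ℝ}
    {g : E → E} {l : ℝ} (hg : ∀ z, HasGradientAt h (g z) z)
    (hlip : ∀ z z', ‖g z - g z'‖ ≤ l * ‖z - z'‖) : StrongConvexOn s (-l) h := by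
  refine ⟨hs, fun x _ y _ a b ha hb hab => ?_⟩
  obtain rfl := eq_sub_of_add_eq hab
  set m := (1 - b) • x + b • y
  have hx := add_inner_sub_le_of_lipschitz_gradient hg hlip m x
  have hy := add_inner_sub_le_of_lipschitz_gradient hg hlip m y
  have hxm : x - m = b • (x - y) := by module
  have hym : y - m = (b - 1) • (x - y) := by module
  rw [hxm, inner_smul_right, norm_smul, Real.norm_of_nonneg hb] at hx
  rw [hym, inner_smul_right, norm_smul, Real.norm_eq_abs, abs_of_nonpos (by linarith)] at hy
  simp only [smul_eq_mul]
  nlinarith [mul_le_mul_of_nonneg_left hx ha, mul_le_mul_of_nonneg_left hy hb]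

lemma ConcaveOn.sub_le_inner_of_hasGradientAt {Y : Set E} {h : E → ℝ} {a b g : E}
    (hc : ConcaveOn ℝ Y h) (ha : a ∈ Y) (hb : b ∈ Y) (hg : HasGradientAt h g a) :
    h b - h a ≤ ⟪g, b - a⟫ := by
  have hline : ConcaveOn ℝ (lineMap a b ⁻¹' Y) (h ∘ lineMap a b) := hc.comp_affineMap _
  have hslope := hline.slope_le_of_hasDerivAt (x := 0) (y := 1) (by simpa using ha)
    (by simpa using hb) zero_lt_one (HasGradientAt.hasDerivAt_comp_lineMap (by simpa using hg))
  simpa [slope_def_field] using hslope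

lemma ConcaveOn.sSup_image_sub_le_diam_mul {Y : Set E} {h : E → ℝ} {y g v : E}
    (hc : ConcaveOn ℝ Y h) (hY : Bornology.IsBounded Y) (hy : y ∈ Y) (hg : HasGradientAt h g y)
    (hv : ∀ s ∈ Y, ⟪v, s - y⟫ ≤ 0) :
    sSup (h '' Y) - h y ≤ Metric.diam Y * ‖-g + v‖ := by
  rw [sub_le_iff_le_add']
  refine csSup_le ⟨h y, mem_image_of_mem h hy⟩ ?_
  rintro _ ⟨w, hw, rfl⟩
  have htangent := hc.sub_le_inner_of_hasGradientAt hy hw hg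
  have hnormal := inner_le_norm_neg_add_mul (a := g) (hv w hw)
  have hdiam : ‖w - y‖ ≤ Metric.diam Y := by
    rw [← dist_eq_norm]
    exact Metric.dist_le_diam_of_mem hY hw hy
  nlinarith [mul_le_mul_of_nonneg_left hdiam (norm_nonneg (-g + v))]

end InnerProductSpace

lemma sq_le_of_mul_sq_le_add_mul {l r c A B : ℝ} (hl : 0 < l) (h : l * r ^ 2 ≤ c * B + A * r) :
    r ^ 2 ≤ 2 * c / l * B + 1 / l ^ 2 * A ^ 2 := by
  rw [show 2 * c / l * B + 1 / l ^ 2 * A ^ 2 = (2 * l * (c * B) + A ^ 2) / l ^ 2 by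
    field_simp, le_div_iff₀ (by positivity)]
  nlinarith [sq_nonneg (l * r - A)]

theorem gs_controls_os_general
    (n d : ℕ) (f : Euc n → Euc d → ℝ) (gx : Euc n → Euc d → Euc n)
    (gy : Euc n → Euc d → Euc d) (X : Set (Euc n)) (Y : Set (Euc d))
    (l Dy : ℝ) (x p : Euc n) (y : Euc d)
    (hl : 0 < l)
    (hsmooth : LSmooth f gx gy l) (hstand : Standing f X Y Dy)
    (hx : x ∈ X) (hy : y ∈ Y) (hp : p ∈ X)
    -- p is the minimizer over z ∈ X of Φ(z) + ℓ‖z − x‖², where Φ(z) = max_{y'∈Y} f(z,y')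
    (hmin : ∀ z ∈ X,
      sSup (f p '' Y) + l * ‖p - x‖ ^ 2 ≤ sSup (f z '' Y) + l * ‖z - x‖ ^ 2) :
    ∀ u v, (∀ s ∈ X, (inner ℝ u (s - x) : ℝ) ≤ 0) → (∀ s ∈ Y, (inner ℝ v (s - y) : ℝ) ≤ 0) →
      ‖p - x‖ ^ 2 ≤ 2 * Dy / l * ‖-gy x y + v‖ + 1 / l ^ 2 * ‖gx x y + u‖ ^ 2 := by
  obtain ⟨hgx, hgy, hgx_lip, -⟩ := hsmooth
  obtain ⟨-, hXconv, hYne, hYcomp, -, -, rfl, hconc⟩ := hstand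
  intro u v hu hv
  have hgx_lip_x : ∀ w z z', ‖gx z w - gx z' w‖ ≤ l * ‖z - z'‖ := fun w z z' => by
    simpa using hgx_lip z z' w w
  have hbdd : ∀ z, BddAbove (f z '' Y) := fun z => hYcomp.bddAbove_image
    (Differentiable.continuous fun w => (hgy z w).differentiableAt).continuousOn
  have hstrong : StrongConvexOn X l fun z => sSup (f z '' Y) + l * ‖z - x‖ ^ 2 :=
    ((uniformConvexOn_sSup_image hYne (fun z _ => hbdd z) fun w _ =>
      strongConvexOn_neg_of_lipschitz_gradient hXconv (fun z => hgx z w) (hgx_lip_x w)).add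
      (strongConvexOn_mul_norm_sub_sq hXconv l x)).mono fun r =>
        le_of_eq (by simp only [Pi.add_apply]; ring)
  have hgrowth := hstrong.add_sq_le_of_isMinOn (isMinOn_iff.mpr hmin) hp hx
  have hmax := (hconc x hx).sSup_image_sub_le_diam_mul hYcomp.isBounded hy (hgy x y) hv
  have hdescent := add_inner_sub_le_of_lipschitz_gradient (fun z => hgx z y) (hgx_lip_x y) x p
  have hnormal := inner_le_norm_neg_add_mul (a := -gx x y) (hu p hp)
  have hfp := le_csSup (hbdd p) (mem_image_of_mem _ hy)
  rw [neg_neg, inner_neg_left] at hnormal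
  rw [sub_self, norm_zero, norm_sub_rev x p] at hgrowth
  refine sq_le_of_mul_sq_le_add_mul hl ?_
  linarith

/-- Game stationarity controls optimization stationarity:
`‖p − x‖² ≤ (2 D_Y/ℓ)·‖−∇_y f(x,y) + v‖ + (1/ℓ²)·‖∇_x f(x,y) + u‖²`
for the proximal point `p` of `Φ(z) = max_{y∈Y} f(z,y)` at `x`, and any
normal-cone elements `u ∈ N_X(x)`, `v ∈ N_Y(y)`. -/
theorem gs_controls_os
    (n d : ℕ) (f : Euc n → Euc d → ℝ) (gx : Euc n → Euc d → Euc n)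
    (gy : Euc n → Euc d → Euc d) (X : Set (Euc n)) (Y : Set (Euc d))
    (l Dy : ℝ) (x p : Euc n) (y : Euc d)
    (hl : 0 < l) (hDy : 0 < Dy)
    (hsmooth : LSmooth f gx gy l) (hstand : Standing f X Y Dy)
    (hx : x ∈ X) (hy : y ∈ Y) (hp : p ∈ X)
    -- p is the minimizer over z ∈ X of Φ(z) + ℓ‖z − x‖², where Φ(z) = max_{y'∈Y} f(z,y')
    (hmin : ∀ z ∈ X,
      sSup (f p '' Y) + l * ‖p - x‖ ^ 2 ≤ sSup (f z '' Y) + l * ‖z - x‖ ^ 2) :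
    ∀ u v, (∀ s ∈ X, (inner ℝ u (s - x) : ℝ) ≤ 0) → (∀ s ∈ Y, (inner ℝ v (s - y) : ℝ) ≤ 0) →
      ‖p - x‖ ^ 2 ≤ 2 * Dy / l * ‖-gy x y + v‖ + 1 / l ^ 2 * ‖gx x y + u‖ ^ 2 :=
  gs_controls_os_general n d f gx gy X Y l Dy x p y hl hsmooth hstand hx hy hp hmin
end
end

section
/- Lemma (explicit trajectory of Perturbed GDA on the hard GS instance). Let ℓ, r_y, D_Y, ε > 0, consider the hard GS instance, and run Perturbed GDA on f̃(x,y) = f(x,y) − (r_y/2)y² with step sizes c, α > 0. Suppose A_1 < 0, A_1² ≥ 4B_1 and 2B_1 < −A_1 (so that −1 < λ_1 < 0). Initialize x_0 := 2ε/ℓ and y_0 := (2b(1 + ℓc)α/(√(A_1² − 4B_1) + 2ℓc − A_1))·x_0, and assume 0 ≤ x_0 ≤ r_y·D_Y/b and 0 ≤ y_0 ≤ D_Y. Then for every t ∈ ℕ: x_t ∈ [0, r_y·D_Y/b], y_t ∈ [0, D_Y], x_t = (1 + λ_1)^t·x_0, and y_t = (1 + λ_1)^t·y_0. -/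
noncomputable section

/-- Explicit trajectory of Perturbed GDA on the hard GS instance:
initialized along the eigenvector of the recursion, the iterates stay in the
middle branch and contract geometrically with factor `1 + λ₁`. -/
theorem perturbed_gda_hard_gs_trajectory
    (l ry Dy ε c α : ℝ) (xs ys : ℕ → ℝ)
    (hl : 0 < l) (hry : 0 < ry) (hDy : 0 < Dy) (hε : 0 < ε)
    (hc : 0 < c) (hα : 0 < α)
    (hA1 : A1 l c α ry < 0)
    (hdisc : (A1 l c α ry) ^ 2 ≥ 4 * B1 l c α ry)
    (hB1 : 2 * B1 l c α ry < -(A1 l c α ry))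
    -- initialization along the eigenvector
    (hx0 : xs 0 = 2 * ε / l)
    (hy0 : ys 0 = 2 * bGS l ry * (1 + l * c) * α /
      (Real.sqrt ((A1 l c α ry) ^ 2 - 4 * B1 l c α ry) + 2 * l * c - A1 l c α ry) * xs 0)
    (hx0mem : 0 ≤ xs 0 ∧ xs 0 ≤ ry * Dy / bGS l ry)
    (hy0mem : 0 ≤ ys 0 ∧ ys 0 ≤ Dy)
    -- Perturbed GDA on f̃(x,y) = f(x,y) − (r_y/2) y²
    (hxrec : ∀ t, xs (t + 1) = xs t - c * fxGS l ry Dy (xs t) (ys t))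
    (hyrec : ∀ t, ys (t + 1) =
      projI Dy (ys t + α * (fyGS l ry Dy (xs (t + 1)) (ys t) - ry * ys t))) :
    ∀ t : ℕ, xs t ∈ Set.Icc 0 (ry * Dy / bGS l ry) ∧ ys t ∈ Set.Icc 0 Dy ∧
      xs t = (1 + lam1 l c α ry) ^ t * xs 0 ∧
      ys t = (1 + lam1 l c α ry) ^ t * ys 0 := by
  obtain ⟨hx0l, hx0r⟩ := hx0mem
  obtain ⟨hy0l, hy0r⟩ := hy0mem
  have hlc : 0 < l * c := mul_pos hl hc
  set A := A1 l c α ry with hA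
  set B := B1 l c α ry with hB
  set s := Real.sqrt (A ^ 2 - 4 * B) with hsdef
  have hAval : A = l * c - α * ry * (1 + 3 * l * c) := by rw [hA]; rfl
  have hBval : B = 2 * l * c * α * ry := by rw [hB]; rfl
  have hBpos : 0 < B := by rw [hBval]; positivity
  have hs0 : 0 ≤ s := Real.sqrt_nonneg _
  have hs2 : s ^ 2 = A ^ 2 - 4 * B := Real.sq_sqrt (by linarith)
  set b := bGS l ry with hbdef
  have hb2 : b ^ 2 = 3 * l * ry := Real.sq_sqrt (by positivity)
  have hbpos : 0 < b := Real.sqrt_pos.2 (by positivity)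
  set lam := lam1 l c α ry with hlamdef
  have hlam : lam = (A + s) / 2 := by
    rw [hlamdef]; unfold lam1; rw [← hA, ← hB, ← hsdef]
  have hslt : s < -A := by nlinarith [hs2, hBpos, hs0]
  have hlamneg : lam < 0 := by rw [hlam]; linarith
  have hlamgt : -1 < lam := by
    rw [hlam]
    by_contra h
    push_neg at h
    have h2 : A + s ≤ -2 := by linarith
    nlinarith [hs2, hB1, hs0,
      mul_nonneg (by linarith : (0:ℝ) ≤ -(A + s + 2)) (by linarith : (0:ℝ) ≤ -(A - s)),
      mul_nonneg (by linarith : (0:ℝ) ≤ -(A - s + 2)) (by linarith : (0:ℝ) ≤ -(A + s))]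
  have hρpos : 0 < 1 + lam := by linarith
  have hρle : 1 + lam ≤ 1 := by linarith
  have hD : 0 < s + 2 * l * c - A := by linarith
  have hDne : s + 2 * l * c - A ≠ 0 := ne_of_gt hD
  have hsval : s = 2 * lam - A := by rw [hlam]; ring
  have hchar : lam ^ 2 - A * lam + B = 0 := by
    rw [hlam]; linear_combination hs2 / 4
  -- key scalar identities
  have hchar' : lam ^ 2 - (l * c - α * ry * (1 + 3 * l * c)) * lam + 2 * l * c * α * ry = 0 := by
    rw [← hAval, ← hBval]; exact hchar
  have hK1 : c * b * (2 * b * (1 + l * c) * α / (s + 2 * l * c - A)) = l * c - lam := by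
    rw [show c * b * (2 * b * (1 + l * c) * α / (s + 2 * l * c - A))
        = c * b * (2 * b * (1 + l * c) * α) / (s + 2 * l * c - A) from by ring,
      div_eq_iff hDne, hsval, hAval]
    linear_combination (2 * c * (1 + l * c) * α) * hb2 + 2 * hchar'
  have hbridge : (1 + lam) * (s + 2 * l * c - A) = 2 * (1 + l * c) * (lam + α * ry) := by
    rw [hsval, hAval]
    linear_combination 2 * hchar'
  have hK2 : (1 - α * ry) * (2 * b * (1 + l * c) * α / (s + 2 * l * c - A)) +
      α * b * (1 + lam) = (1 + lam) * (2 * b * (1 + l * c) * α / (s + 2 * l * c - A)) := by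
    rw [show (1 - α * ry) * (2 * b * (1 + l * c) * α / (s + 2 * l * c - A)) + α * b * (1 + lam)
        = ((1 - α * ry) * (2 * b * (1 + l * c) * α) + α * b * (1 + lam) * (s + 2 * l * c - A))
          / (s + 2 * l * c - A) from by field_simp]
    rw [show (1 + lam) * (2 * b * (1 + l * c) * α / (s + 2 * l * c - A))
        = (1 + lam) * (2 * b * (1 + l * c) * α) / (s + 2 * l * c - A) from by ring]
    rw [div_eq_div_iff hDne hDne]
    linear_combination (α * b * (s + 2 * l * c - A)) * hbridge
  -- eigenvector step identities
  have key1 : (1 + l * c) * xs 0 - c * b * ys 0 = (1 + lam) * xs 0 := by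
    rw [hy0]
    linear_combination (-(xs 0)) * hK1
  have key2 : (1 - α * ry) * ys 0 + α * (b * ((1 + lam) * xs 0)) = (1 + lam) * ys 0 := by
    rw [hy0]
    linear_combination xs 0 * hK2
  intro t
  induction t with
  | zero =>
    refine ⟨⟨hx0l, hx0r⟩, ⟨hy0l, hy0r⟩, ?_, ?_⟩ <;> simp
  | succ t ih =>
    obtain ⟨⟨hxl, hxr⟩, ⟨hyl, hyr⟩, hxt, hyt⟩ := ih
    have hpow0 : 0 ≤ (1 + lam) ^ (t + 1) := pow_nonneg hρpos.le _
    have hpow1 : (1 + lam) ^ (t + 1) ≤ 1 := pow_le_one₀ hρpos.le hρle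
    have hfx : fxGS l ry Dy (xs t) (ys t) = -l * xs t + b * ys t := by
      unfold fxGS
      rw [if_neg (not_lt.2 hxl), if_pos (by rw [← hbdef]; exact hxr), ← hbdef]
    have hxsucc : xs (t + 1) = (1 + lam) ^ (t + 1) * xs 0 := by
      calc xs (t + 1) = (1 + lam) ^ t * ((1 + l * c) * xs 0 - c * b * ys 0) := by
            rw [hxrec t, hfx, hxt, hyt]; ring
        _ = (1 + lam) ^ t * ((1 + lam) * xs 0) := by rw [key1]
        _ = (1 + lam) ^ (t + 1) * xs 0 := by ring
    have hxsl : 0 ≤ xs (t + 1) := by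
      rw [hxsucc]; exact mul_nonneg hpow0 hx0l
    have hxsr : xs (t + 1) ≤ ry * Dy / bGS l ry := by
      rw [hxsucc]
      calc (1 + lam) ^ (t + 1) * xs 0 ≤ 1 * xs 0 :=
            mul_le_mul_of_nonneg_right hpow1 hx0l
        _ = xs 0 := one_mul _
        _ ≤ ry * Dy / bGS l ry := hx0r
    have hfy : fyGS l ry Dy (xs (t + 1)) (ys t) = b * xs (t + 1) := by
      unfold fyGS
      rw [if_neg (not_lt.2 hxsl), if_pos hxsr, ← hbdef]
    have hval : ys t + α * (fyGS l ry Dy (xs (t + 1)) (ys t) - ry * ys t) =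
        (1 + lam) ^ (t + 1) * ys 0 := by
      calc ys t + α * (fyGS l ry Dy (xs (t + 1)) (ys t) - ry * ys t)
          = (1 + lam) ^ t * ((1 - α * ry) * ys 0 + α * (b * ((1 + lam) * xs 0))) := by
            rw [hfy, hxsucc, hyt]; ring
        _ = (1 + lam) ^ t * ((1 + lam) * ys 0) := by rw [key2]
        _ = (1 + lam) ^ (t + 1) * ys 0 := by ring
    have hv0 : 0 ≤ (1 + lam) ^ (t + 1) * ys 0 := mul_nonneg hpow0 hy0l
    have hvD : (1 + lam) ^ (t + 1) * ys 0 ≤ Dy := by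
      calc (1 + lam) ^ (t + 1) * ys 0 ≤ 1 * ys 0 :=
            mul_le_mul_of_nonneg_right hpow1 hy0l
        _ = ys 0 := one_mul _
        _ ≤ Dy := hy0r
    have hysucc : ys (t + 1) = (1 + lam) ^ (t + 1) * ys 0 := by
      rw [hyrec t, hval]
      unfold projI
      rw [min_eq_right hvD, max_eq_right hv0]
    refine ⟨⟨hxsl, hxsr⟩, ⟨?_, ?_⟩, hxsucc, hysucc⟩
    · rw [hysucc]; exact hv0
    · rw [hysucc]; exact hvD
end
end
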